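/- arXiv:1112.4205 — 4 statements merged into one kernel-verified Lean document; each statement's English description precedes it below -/
import Mathlib

section
/- The Takagi function is the unique continuous function f on [0,1] satisfying both f(x) = f(1−x) and f(x/2) = x/2 + f(x)/2 for all x in [0,1]. -/
open scoped BigOperators

/-- Distance from a real number to the nearest integer. -/
noncomputable def nearestDist (t : ℝ) : ℝ := |t - round t|

/-- The Takagi function. -/
noncomputable def takagi (x : ℝ) : ℝ := ∑' n : ℕ, (1 / 2 ^ n) * nearestDist (2 ^ n * x)

/-- Partial Takagi function of level `n`. -/
noncomputable def takagiPartial (n : ℕ) (x : ℝ) : ℝ :=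
  ∑ j ∈ Finset.range n, (1 / 2 ^ j) * nearestDist (2 ^ j * x)

/-- The symmetric tent map. -/
noncomputable def tent (x : ℝ) : ℝ := if x ≤ 1 / 2 then 2 * x else 2 - 2 * x

/-!
The Takagi function is a uniformly convergent series of continuous functions, its symmetry comes
from `⟨-t + m⟩ = ⟨t⟩` for integers `m`, and its functional equation from the fact that the first
term of `τ (x / 2)` is `x / 2` while the others are the terms of `τ x / 2`.

For uniqueness, the difference `h = f - τ` of two solutions satisfies `h x = h (1 - x)` and
`h (x / 2) = h x / 2`. If `|h|` attains its maximum `M` on `[0, 1]` at `x₀`, by symmetry we may take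
`x₀ ≤ 1 / 2`, and then `M = |h (2 x₀)| / 2 ≤ M / 2`, so `M = 0`.
-/

open Set

theorem nearestDist_nonneg (t : ℝ) : 0 ≤ nearestDist t := abs_nonneg _

theorem nearestDist_le_half (t : ℝ) : nearestDist t ≤ 1 / 2 := abs_sub_round t

theorem nearestDist_le_abs_sub_intCast (t : ℝ) (m : ℤ) : nearestDist t ≤ |t - m| := round_le t m

theorem nearestDist_add_intCast (t : ℝ) (m : ℤ) : nearestDist (t + m) = nearestDist t := by
  simp only [nearestDist, round_add_intCast, Int.cast_add, add_sub_add_right_eq_sub]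

theorem nearestDist_neg_le (t : ℝ) : nearestDist (-t) ≤ nearestDist t := by
  calc nearestDist (-t) ≤ |-t - ((-round t : ℤ) : ℝ)| := nearestDist_le_abs_sub_intCast _ _
    _ = nearestDist t := by rw [Int.cast_neg, neg_sub_neg, abs_sub_comm]; rfl

theorem nearestDist_neg (t : ℝ) : nearestDist (-t) = nearestDist t :=
  le_antisymm (nearestDist_neg_le t) (by simpa using nearestDist_neg_le (-t))

theorem nearestDist_eq_self {t : ℝ} (ht : t ∈ Icc (0 : ℝ) (1 / 2)) : nearestDist t = t := by
  obtain ⟨h0, h1⟩ := ht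
  refine le_antisymm (by simpa [abs_of_nonneg h0] using nearestDist_le_abs_sub_intCast t 0) ?_
  rcases le_or_gt (round t) 0 with hm | hm
  · have : (round t : ℝ) ≤ 0 := by exact_mod_cast hm
    exact (by linarith : t ≤ t - round t).trans (le_abs_self _)
  · have : (1 : ℝ) ≤ round t := by exact_mod_cast hm
    exact (by linarith : t ≤ -(t - round t)).trans (neg_le_abs _)

theorem lipschitzWith_nearestDist : LipschitzWith 1 nearestDist :=
  LipschitzWith.of_le_add fun a b =>
    calc nearestDist a ≤ |(a - b) + (b - round b)| := by
          rw [sub_add_sub_cancel]; exact nearestDist_le_abs_sub_intCast a _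
      _ ≤ nearestDist b + dist a b := by
          rw [add_comm, Real.dist_eq]; exact abs_add_le _ _

theorem norm_takagi_term_le (n : ℕ) (x : ℝ) :
    ‖1 / 2 ^ n * nearestDist (2 ^ n * x)‖ ≤ (1 / 2 : ℝ) ^ n := by
  rw [Real.norm_of_nonneg (mul_nonneg (by positivity) (nearestDist_nonneg _)), one_div_pow]
  calc 1 / 2 ^ n * nearestDist (2 ^ n * x) ≤ 1 / 2 ^ n * (1 / 2) := by
        gcongr; exact nearestDist_le_half _
    _ ≤ 1 / 2 ^ n := by
        have : (0 : ℝ) ≤ 1 / 2 ^ n := by positivity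
        linarith

theorem summable_takagi_term (x : ℝ) :
    Summable fun n : ℕ => 1 / 2 ^ n * nearestDist (2 ^ n * x) :=
  summable_geometric_two.of_norm_bounded (norm_takagi_term_le · x)

theorem continuous_takagi : Continuous takagi :=
  continuous_tsum
    (fun _ => continuous_const.mul
      (lipschitzWith_nearestDist.continuous.comp (continuous_const_mul _)))
    summable_geometric_two norm_takagi_term_le

theorem takagi_one_sub (x : ℝ) : takagi (1 - x) = takagi x := by
  refine tsum_congr fun n => ?_
  have h : (2 : ℝ) ^ n * (1 - x) = -(2 ^ n * x) + ((2 ^ n : ℤ) : ℝ) := by push_cast; ring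
  rw [h, nearestDist_add_intCast, nearestDist_neg]

theorem takagi_div_two {x : ℝ} (hx : x ∈ Icc (0 : ℝ) 1) :
    takagi (x / 2) = x / 2 + takagi x / 2 := by
  have hfirst : nearestDist (x / 2) = x / 2 :=
    nearestDist_eq_self ⟨by linarith [hx.1], by linarith [hx.2]⟩
  rw [takagi, (summable_takagi_term (x / 2)).tsum_eq_zero_add, takagi, ← tsum_div_const]
  simp only [pow_zero, div_one, one_mul, hfirst, pow_succ]
  congr 1
  refine tsum_congr fun n => ?_
  rw [mul_assoc, mul_div_cancel₀ x two_ne_zero]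
  ring

theorem eqOn_zero_of_one_sub_of_half {h : ℝ → ℝ} (hc : ContinuousOn h (Icc 0 1))
    (hsymm : ∀ x ∈ Icc (0 : ℝ) 1, h x = h (1 - x))
    (hhalf : ∀ x ∈ Icc (0 : ℝ) 1, h (x / 2) = h x / 2) :
    EqOn h 0 (Icc 0 1) := by
  obtain ⟨x₀, hx₀, hmax⟩ :=
    isCompact_Icc.exists_isMaxOn (nonempty_Icc.mpr zero_le_one) hc.abs
  have hle : ∀ x ∈ Icc (0 : ℝ) 1, |h x| ≤ |h x₀| := fun x hx => hmax hx
  obtain ⟨y, hy, hy_half, hy_eq⟩ : ∃ y ∈ Icc (0 : ℝ) 1, y ≤ 1 / 2 ∧ |h y| = |h x₀| := by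
    rcases le_or_gt x₀ (1 / 2) with hx | hx
    · exact ⟨x₀, hx₀, hx, rfl⟩
    · exact ⟨1 - x₀, ⟨by linarith [hx₀.2], by linarith⟩, by linarith, by rw [← hsymm x₀ hx₀]⟩
  have h2y : 2 * y ∈ Icc (0 : ℝ) 1 := ⟨by linarith [hy.1], by linarith⟩
  have hM : |h x₀| ≤ |h x₀| / 2 :=
    calc |h x₀| = |h (2 * y)| / 2 := by
          have hy_half_eq := hhalf _ h2y
          rw [mul_div_cancel_left₀ y two_ne_zero] at hy_half_eq
          rw [← hy_eq, hy_half_eq, abs_div, abs_two]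
      _ ≤ |h x₀| / 2 := by linarith [hle _ h2y]
  intro x hx
  exact abs_nonpos_iff.mp ((hle x hx).trans (by linarith [abs_nonneg (h x₀)]))

theorem takagi_unique_continuous :
    (ContinuousOn takagi (Set.Icc (0:ℝ) 1) ∧
      (∀ x ∈ Set.Icc (0:ℝ) 1, takagi x = takagi (1 - x)) ∧
      (∀ x ∈ Set.Icc (0:ℝ) 1, takagi (x / 2) = x / 2 + takagi x / 2)) ∧
    ∀ f : ℝ → ℝ, ContinuousOn f (Set.Icc (0:ℝ) 1) →
      (∀ x ∈ Set.Icc (0:ℝ) 1, f x = f (1 - x)) →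
      (∀ x ∈ Set.Icc (0:ℝ) 1, f (x / 2) = x / 2 + f x / 2) →
      ∀ x ∈ Set.Icc (0:ℝ) 1, f x = takagi x := by
  refine ⟨⟨continuous_takagi.continuousOn, fun x _ => (takagi_one_sub x).symm,
    fun x hx => takagi_div_two hx⟩, fun f hc hsymm hhalf x hx => ?_⟩
  have hzero := eqOn_zero_of_one_sub_of_half (h := f - takagi)
    (hc.sub continuous_takagi.continuousOn)
    (fun y hy => by simp only [Pi.sub_apply, hsymm y hy, takagi_one_sub])
    (fun y hy => by simp only [Pi.sub_apply, hhalf y hy, takagi_div_two hy]; ring)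
  exact sub_eq_zero.mp (hzero hx)
end

section
/- For any balanced dyadic rational x₀ = k/2^n in [0,1] with D_n(x₀) = 0 (equal numbers of 0 and 1 bits among the first n binary digits), the Takagi function satisfies τ(x₀ + y/2^n) = τ(x₀) + τ(y)/2^n for all y in [0,1]. -/
open scoped BigOperators

/-!
On `[k/2^n, (k+1)/2^n]` the first `n` terms of the Takagi series are affine, the `j`-th term with
slope `±1` according to the `(j+1)`-st binary digit of `k/2^n`; so the partial sum has slope
`n - 2 s(k) = D_n(k/2^n)`, `s` the binary digit sum, which vanishes for balanced `k`. The remaining terms are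
`τ(2^n x) / 2^n`, and `τ` has period `1`.
-/

open Set

lemma nearestDist_intCast_add (a : ℤ) (t : ℝ) : nearestDist (a + t) = nearestDist t := by
  simp [nearestDist, abs_sub_round_eq_min]

lemma nearestDist_eq_min {u : ℝ} (hu : u ∈ Icc 0 1) : nearestDist u = min u (1 - u) := by
  rw [nearestDist, abs_sub_round_eq_min]
  rcases hu.2.lt_or_eq with hlt | rfl
  · rw [Int.fract_eq_self.mpr ⟨hu.1, hlt⟩]
  · simp

lemma nearestDist_add_div_two {b : ℕ} (hb : b < 2) {y : ℝ} (hy : y ∈ Icc 0 1) :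
    nearestDist ((b + y) / 2) = nearestDist (b / 2) + (1 - 2 * b) * y / 2 := by
  obtain ⟨hy0, hy1⟩ := hy
  interval_cases b
  · rw [nearestDist_eq_min ⟨by simp; linarith, by simp; linarith⟩]
    simp only [Nat.cast_zero, zero_add, zero_div, mul_zero, sub_zero, one_mul]
    rw [min_eq_left (by linarith)]
    simp [nearestDist]
  · rw [nearestDist_eq_min ⟨by simp; linarith, by simp; linarith⟩,
      nearestDist_eq_min ⟨by norm_num, by norm_num⟩]
    rw [min_eq_right (by simp; linarith), min_eq_left (by norm_num)]
    push_cast; ring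

lemma digits_two_sum (k : ℕ) : (Nat.digits 2 k).sum = k % 2 + (Nat.digits 2 (k / 2)).sum := by
  rcases k.eq_zero_or_pos with rfl | hk
  · simp
  · rw [Nat.digits_def' one_lt_two hk, List.sum_cons]

lemma takagiPartial_succ (n : ℕ) (x : ℝ) :
    takagiPartial (n + 1) x = takagiPartial n x + 1 / 2 ^ n * nearestDist (2 ^ n * x) :=
  Finset.sum_range_succ _ _

theorem takagiPartial_add_div_two_pow {n k : ℕ} (hk : k < 2 ^ n) {y : ℝ} (hy : y ∈ Icc 0 1) :
    takagiPartial n ((k + y) / 2 ^ n)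
      = takagiPartial n (k / 2 ^ n) + (n - 2 * (Nat.digits 2 k).sum) * y / 2 ^ n := by
  induction n generalizing k y with
  | zero =>
    obtain rfl : k = 0 := by simpa using hk
    simp [takagiPartial]
  | succ n ih =>
    set q := k / 2
    set b := k % 2
    have hb : b < 2 := Nat.mod_lt _ two_pos
    have hq : q < 2 ^ n := by omega
    have hbq : (k : ℝ) = 2 * q + b := by exact_mod_cast (Nat.div_add_mod k 2).symm
    have step : ∀ t ∈ Icc (0 : ℝ) 1, takagiPartial (n + 1) ((k + t) / 2 ^ (n + 1))
        = takagiPartial n (q / 2 ^ n) + (n - 2 * (Nat.digits 2 q).sum) * ((b + t) / 2) / 2 ^ n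
          + 1 / 2 ^ n * (nearestDist (b / 2) + (1 - 2 * b) * t / 2) := by
      intro t ht
      have ht' : (b + t) / 2 ∈ Icc (0 : ℝ) 1 := by
        have : (b : ℝ) ≤ 1 := by exact_mod_cast Nat.lt_succ_iff.mp hb
        constructor <;> linarith [ht.1, ht.2]
      have hx : (k + t) / 2 ^ (n + 1) = (q + (b + t) / 2) / 2 ^ n := by
        rw [hbq, pow_succ]; field_simp; ring
      rw [takagiPartial_succ, hx, ih hq ht', mul_div_cancel₀ _ (by positivity),
        ← Int.cast_natCast q, nearestDist_intCast_add, nearestDist_add_div_two hb ht]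
    have hk0 : (k : ℝ) / 2 ^ (n + 1) = (k + 0) / 2 ^ (n + 1) := by rw [add_zero]
    have hdigits : ((Nat.digits 2 k).sum : ℝ) = b + (Nat.digits 2 q).sum := by
      exact_mod_cast digits_two_sum k
    rw [hk0, step y hy, step 0 ⟨le_rfl, zero_le_one⟩, hdigits]
    push_cast
    field_simp
    ring

lemma takagi_summable (x : ℝ) :
    Summable fun m : ℕ => (1 / 2 ^ m : ℝ) * nearestDist (2 ^ m * x) := by
  refine summable_geometric_two.of_nonneg_of_le
    (fun m => mul_nonneg (by positivity) (abs_nonneg _)) (fun m => ?_)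
  have h : nearestDist (2 ^ m * x) ≤ 1 := (abs_sub_round _).trans (by norm_num)
  simpa [div_pow] using mul_le_mul_of_nonneg_left h (by positivity : (0 : ℝ) ≤ 1 / 2 ^ m)

theorem takagi_eq_takagiPartial_add (n : ℕ) (x : ℝ) :
    takagi x = takagiPartial n x + takagi (2 ^ n * x) / 2 ^ n := by
  rw [takagi, ← (takagi_summable x).sum_add_tsum_nat_add n, takagiPartial, takagi, div_eq_mul_inv,
    mul_comm, ← tsum_mul_left]
  congr 2 with j
  rw [pow_add, mul_assoc]
  field_simp

lemma takagi_intCast_add (a : ℤ) (x : ℝ) : takagi (a + x) = takagi x := by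
  unfold takagi
  congr 1 with m
  rw [mul_add, show (2 : ℝ) ^ m * a = ((2 ^ m * a : ℤ) : ℝ) by push_cast; ring,
    nearestDist_intCast_add]

lemma takagi_intCast (a : ℤ) : takagi a = 0 := by
  simpa [takagi, nearestDist] using takagi_intCast_add a 0

theorem takagi_balanced_self_affine (n k : ℕ) (hk : k < 2 ^ n)
    (hbal : (n : ℤ) = 2 * ((Nat.digits 2 k).sum : ℤ))
    (y : ℝ) (hy : y ∈ Set.Icc (0:ℝ) 1) :
    takagi ((k : ℝ) / 2 ^ n + y / 2 ^ n)
      = takagi ((k : ℝ) / 2 ^ n) + takagi y / 2 ^ n := by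
  have hslope : (n : ℝ) - 2 * (Nat.digits 2 k).sum = 0 := by
    rw [sub_eq_zero]; exact_mod_cast hbal
  have hpow : (2 : ℝ) ^ n ≠ 0 := by positivity
  rw [← add_div, takagi_eq_takagiPartial_add n, takagi_eq_takagiPartial_add n (k / 2 ^ n),
    mul_div_cancel₀ _ hpow, mul_div_cancel₀ _ hpow, ← Int.cast_natCast k, takagi_intCast_add,
    takagi_intCast, Int.cast_natCast, takagiPartial_add_div_two_pow hk hy, hslope]
  ring
end

section
/- The Takagi function equals τ(x) = Σ_{n=1}^∞ (1/2^n)·T^{∘n}(x) for x in [0,1], where T^{∘n} is the n-fold iterate of the tent map T(x) = 2x for 0 ≤ x ≤ 1/2 and T(x) = 2−2x for 1/2 ≤ x ≤ 1. -/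
open scoped BigOperators

lemma nearestDist_eq_min_s14 (t : ℝ) :
    nearestDist t = min (Int.fract t) (1 - Int.fract t) :=
  abs_sub_round_eq_min t

lemma tent_eq_two_mul_nearestDist {x : ℝ} (hx : x ∈ Set.Icc (0:ℝ) 1) :
    tent x = 2 * nearestDist x := by
  obtain ⟨h0, h1⟩ := hx
  rw [nearestDist_eq_min_s14, tent]
  rcases eq_or_lt_of_le h1 with h | h
  · subst h
    norm_num [Int.fract_one]
  · rw [Int.fract_eq_self.2 ⟨h0, h⟩]
    rcases le_or_gt x (1/2) with hc | hc
    · rw [if_pos hc, min_eq_left (by linarith)]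
    · rw [if_neg (not_le.2 hc), min_eq_right (by linarith)]; ring

lemma tent_two_mul_nearestDist (t : ℝ) :
    tent (2 * nearestDist t) = 2 * nearestDist (2 * t) := by
  have hf0 := Int.fract_nonneg t
  have hf1 := Int.fract_lt_one t
  set f := Int.fract t with hf
  have h2t : Int.fract (2 * t) = Int.fract (2 * f) := by
    have : 2 * t = 2 * f + 2 * (⌊t⌋ : ℝ) := by
      rw [hf, Int.fract]; ring
    rw [this]
    rw [show ((2:ℝ) * (⌊t⌋:ℝ)) = ((2 * ⌊t⌋ : ℤ) : ℝ) by push_cast; ring,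
      Int.fract_add_intCast]
  rw [nearestDist_eq_min_s14, nearestDist_eq_min_s14, h2t, tent]
  rcases le_or_gt f (1/2) with hc | hc
  · -- nd t = f
    rw [min_eq_left (by linarith)]
    rcases eq_or_lt_of_le hc with he | he
    · have h1 : Int.fract (2 * f) = 0 := by
        rw [show (2:ℝ) * f = 1 by rw [he]; norm_num]
        exact Int.fract_one
      rw [h1, ← hf, he]; norm_num
    · have : Int.fract (2 * f) = 2 * f := Int.fract_eq_self.2 ⟨by linarith, by linarith⟩
      rw [this]
      rcases le_or_gt (2 * f) (1/2) with h4 | h4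
      · rw [if_pos h4, min_eq_left (by linarith)]
      · rw [if_neg (not_le.2 h4), min_eq_right (by linarith)]; ring
  · -- nd t = 1 - f
    rw [min_eq_right (by linarith)]
    have : Int.fract (2 * f) = 2 * f - 1 := by
      have : Int.fract (2 * f) = Int.fract (2 * f - 1) := by
        rw [show (2 * f - 1 : ℝ) = 2 * f + (-1 : ℤ) by push_cast; ring, Int.fract_add_intCast]
      rw [this, Int.fract_eq_self.2 ⟨by linarith, by linarith⟩]
    rw [this]
    rcases le_or_gt (2 * (1 - f)) (1/2) with h4 | h4
    · rw [if_pos h4, min_eq_right (by linarith)]; ring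
    · rw [if_neg (not_le.2 h4), min_eq_left (by linarith)]; ring

lemma tent_iterate_eq {x : ℝ} (hx : x ∈ Set.Icc (0:ℝ) 1) (n : ℕ) :
    tent^[n + 1] x = 2 * nearestDist (2 ^ n * x) := by
  induction n with
  | zero => simpa using tent_eq_two_mul_nearestDist hx
  | succ n ih =>
    rw [Function.iterate_succ_apply', ih, tent_two_mul_nearestDist]
    ring_nf

theorem takagi_eq_tsum_tent (x : ℝ) (hx : x ∈ Set.Icc (0:ℝ) 1) :
    takagi x = ∑' n : ℕ, (1 / 2 ^ (n + 1)) * (tent^[n + 1] x) := by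
  rw [takagi]
  refine tsum_congr fun n => ?_
  rw [tent_iterate_eq hx n, pow_succ]
  ring
end

section
/- The identity Σ_{n=1}^∞ (1/4^n)·T^{∘n}(x) = x(1−x) holds for all x in [0,1], where T is the tent map. -/
open scoped BigOperators

lemma tent_mem {x : ℝ} (hx : x ∈ Set.Icc (0:ℝ) 1) : tent x ∈ Set.Icc (0:ℝ) 1 := by
  obtain ⟨h0, h1⟩ := hx
  unfold tent
  split <;> constructor <;> linarith

lemma tent_iter_mem {x : ℝ} (hx : x ∈ Set.Icc (0:ℝ) 1) (n : ℕ) :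
    tent^[n] x ∈ Set.Icc (0:ℝ) 1 := by
  induction n with
  | zero => simpa using hx
  | succ n ih =>
    rw [Function.iterate_succ_apply']
    exact tent_mem ih

lemma tent_key {x : ℝ} (hx : x ∈ Set.Icc (0:ℝ) 1) :
    x * (1 - x) = tent x / 4 + tent x * (1 - tent x) / 4 := by
  obtain ⟨h0, h1⟩ := hx
  unfold tent
  split <;> ring

lemma tent_partial (x : ℝ) (hx : x ∈ Set.Icc (0:ℝ) 1) (n : ℕ) :
    ∑ k ∈ Finset.range n, (1 / 4 ^ (k + 1)) * (tent^[k + 1] x)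
      = x * (1 - x) - (tent^[n] x) * (1 - tent^[n] x) / 4 ^ n := by
  induction n with
  | zero => simp
  | succ n ih =>
    rw [Finset.sum_range_succ, ih]
    have hk := tent_key (tent_iter_mem hx n)
    rw [Function.iterate_succ_apply']
    have heq : tent^[n] x * (1 - tent^[n] x) / 4 ^ n
        = tent (tent^[n] x) / 4 ^ (n + 1)
          + tent (tent^[n] x) * (1 - tent (tent^[n] x)) / 4 ^ (n + 1) := by
      rw [hk, pow_succ]
      ring
    rw [heq]
    ring

theorem tsum_tent_quarter (x : ℝ) (hx : x ∈ Set.Icc (0:ℝ) 1) :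
    ∑' n : ℕ, (1 / 4 ^ (n + 1)) * (tent^[n + 1] x) = x * (1 - x) := by
  have hnn : ∀ n : ℕ, 0 ≤ (1 / 4 ^ (n + 1)) * (tent^[n + 1] x) := by
    intro n
    have := (tent_iter_mem hx (n + 1)).1
    positivity
  have htend : Filter.Tendsto
      (fun n => ∑ k ∈ Finset.range n, (1 / 4 ^ (k + 1)) * (tent^[k + 1] x))
      Filter.atTop (nhds (x * (1 - x))) := by
    simp only [tent_partial x hx]
    have h1 : Filter.Tendsto (fun n : ℕ => (tent^[n] x) * (1 - tent^[n] x) / 4 ^ n)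
        Filter.atTop (nhds 0) := by
      have h0 : ∀ n : ℕ, 0 ≤ (tent^[n] x) * (1 - tent^[n] x) / 4 ^ n := by
        intro n
        have h := tent_iter_mem hx n
        have h1 := h.1
        have h2 := h.2
        have : (0:ℝ) ≤ (tent^[n] x) * (1 - tent^[n] x) := by nlinarith
        positivity
      have hle : ∀ n : ℕ, (tent^[n] x) * (1 - tent^[n] x) / 4 ^ n ≤ (1/2 : ℝ) ^ n := by
        intro n
        have h := tent_iter_mem hx n
        have h4 : (0:ℝ) < 4 ^ n := by positivity
        rw [div_le_iff₀ h4]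
        have hb : (tent^[n] x) * (1 - tent^[n] x) ≤ 1 := by nlinarith [h.1, h.2]
        calc (tent^[n] x) * (1 - tent^[n] x) ≤ 1 := hb
          _ ≤ (1/2:ℝ)^n * 4^n := by
            rw [← mul_pow]
            norm_num
            exact one_le_pow₀ (by norm_num)
      have hg : Filter.Tendsto (fun n : ℕ => (1/2 : ℝ) ^ n) Filter.atTop (nhds 0) :=
        tendsto_pow_atTop_nhds_zero_of_lt_one (by norm_num) (by norm_num)
      exact squeeze_zero h0 hle hg
    have := Filter.Tendsto.const_sub (x * (1 - x)) h1
    simpa using this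
  exact ((hasSum_iff_tendsto_nat_of_nonneg hnn _).2 htend).tsum_eq
end
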